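/- Let α ∈ Δ^{K-1} maximize Σ_{i=1}^K exp(-τ_i/σ²)·d_i with τ_i defined via α as above. Then τ_1 ≤ τ_2 ≤ ⋯ ≤ τ_K, i.e., at any maximizer the thresholds are nondecreasing in the layer index. -/

import Mathlib

open Finset

/-- Residual power β_i = Σ_{j>i} α_j. -/
noncomputable def resid {K : ℕ} (α : Fin K → ℝ) (i : Fin K) : ℝ :=
  ∑ j ∈ Finset.Ioi i, α j

/-- Effective power margin x_i = α_i - (2^R - 1) β_i. -/
noncomputable def margin {K : ℕ} (R : ℝ) (α : Fin K → ℝ) (i : Fin K) : ℝ :=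
  α i - ((2:ℝ) ^ R - 1) * resid α i

/-- Threshold τ_i as an extended real: (2^R-1)/(P x_i) if x_i > 0, else +∞. -/
noncomputable def tau {K : ℕ} (R P : ℝ) (α : Fin K → ℝ) (i : Fin K) : EReal :=
  if 0 < margin R α i then (((((2:ℝ) ^ R - 1) / (P * margin R α i)) : ℝ) : EReal)
  else ⊤

/-- Asymptotic PDS objective Σ_i exp(-τ_i/σ²) d_i, with exp(-∞) := 0. -/
noncomputable def pdsObj {K : ℕ} (R P σ2 : ℝ) (d : Fin K → ℝ) (α : Fin K → ℝ) : ℝ :=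
  ∑ i : Fin K,
    (if 0 < margin R α i then
        Real.exp (-(((2:ℝ) ^ R - 1) / (P * margin R α i)) / σ2)
      else 0) * d i

/-- The standard simplex. -/
noncomputable def simplex (K : ℕ) : Set (Fin K → ℝ) :=
  {α | (∀ i, 0 ≤ α i) ∧ ∑ i, α i = 1}

lemma Ioi_eq_insert' {K : ℕ} {i j : Fin K} (hij : (j:ℕ) = i + 1) :
    Finset.Ioi i = insert j (Finset.Ioi j) := by
  ext a
  simp only [Finset.mem_Ioi, Finset.mem_insert, Fin.lt_def, Fin.ext_iff]
  omega

lemma resid_adj {K : ℕ} {α : Fin K → ℝ} {i j : Fin K} (hij : (j:ℕ) = i + 1) :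
    resid α i = α j + resid α j := by
  rw [resid, Ioi_eq_insert' hij, Finset.sum_insert (by simp), resid]

lemma phi_mono (γ P σ2 : ℝ) (hγ : 0 < γ) (hP : 0 < P) (hσ : 0 < σ2) :
    Monotone (fun z : ℝ => if 0 < z then Real.exp (-(γ/(P*z))/σ2) else 0) := by
  intro a b hab
  dsimp only
  by_cases ha : 0 < a
  · have hb : 0 < b := lt_of_lt_of_le ha hab
    rw [if_pos ha, if_pos hb]
    apply Real.exp_le_exp.2
    have h2 : γ / (P*b) ≤ γ / (P*a) := by
      apply div_le_div_of_nonneg_left hγ.le (mul_pos hP ha)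
      exact mul_le_mul_of_nonneg_left hab hP.le
    have h3 : -(γ/(P*a)) ≤ -(γ/(P*b)) := neg_le_neg h2
    gcongr
  · rw [if_neg ha]
    split_ifs
    · exact (Real.exp_pos _).le
    · exact le_refl 0

lemma phi_strict (γ P σ2 : ℝ) (hγ : 0 < γ) (hP : 0 < P) (hσ : 0 < σ2)
    {a b : ℝ} (hab : a < b) (hb : 0 < b) :
    (if 0 < a then Real.exp (-(γ/(P*a))/σ2) else 0)
      < (if 0 < b then Real.exp (-(γ/(P*b))/σ2) else 0) := by
  rw [if_pos hb]
  by_cases ha : 0 < a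
  · rw [if_pos ha]
    apply Real.exp_lt_exp.2
    have h2 : γ / (P*b) < γ / (P*a) := by
      apply div_lt_div_of_pos_left hγ (mul_pos hP ha)
      exact (mul_lt_mul_iff_right₀ hP).2 hab
    have h3 : -(γ/(P*a)) < -(γ/(P*b)) := neg_lt_neg h2
    exact div_lt_div_of_pos_right h3 hσ
  · rw [if_neg ha]
    exact Real.exp_pos _

lemma adj_margin_le {K : ℕ} (R P σ2 : ℝ)
    (hR : 0 < R) (hP : 0 < P) (hσ : 0 < σ2)
    (d : Fin K → ℝ) (hd : StrictAnti d) (hdpos : ∀ i, 0 < d i)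
    (α : Fin K → ℝ) (hα : α ∈ simplex K)
    (hmax : ∀ α' ∈ simplex K, pdsObj R P σ2 d α' ≤ pdsObj R P σ2 d α)
    {i j : Fin K} (hij : (j:ℕ) = (i:ℕ) + 1)
    (hj : 0 < margin R α j) : margin R α j ≤ margin R α i := by
  by_contra hcon
  push_neg at hcon
  obtain ⟨hnn, hsum⟩ := hα
  set t : ℝ := (2:ℝ)^R with ht_def
  have ht1 : 1 < t :=
    (Real.one_lt_rpow_iff_of_pos (by norm_num)).2 (Or.inl ⟨one_lt_two, hR⟩)
  have ht0 : 0 < t := lt_trans one_pos ht1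
  have hγ : 0 < t - 1 := by linarith
  have hne : i ≠ j := by
    intro h; rw [h] at hij; omega
  have hlt : i < j := by rw [Fin.lt_def]; omega
  set ε : ℝ := (margin R α j - margin R α i) / t with hε_def
  have hεpos : 0 < ε := div_pos (by linarith) ht0
  have hkey : margin R α j - margin R α i = t * α j - α i := by
    simp only [margin, resid_adj hij]
    ring
  have hαj_ε : α j - ε = α i / t := by
    rw [hε_def, hkey]
    field_simp
    ring
  set α' : Fin K → ℝ := fun l => if l = i then α i + ε else if l = j then α j - ε else α l
    with hα'_def
  have hα'i : α' i = α i + ε := by simp [hα'_def]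
  have hα'j : α' j = α j - ε := by simp [hα'_def, hne.symm]
  have hα'other : ∀ l, l ≠ i → l ≠ j → α' l = α l := by
    intro l h1 h2; simp [hα'_def, h1, h2]
  have hpoint : ∀ m, α' m = α m + ((if m = i then ε else 0) + (if m = j then -ε else 0)) := by
    intro m
    by_cases h1 : m = i
    · subst h1; simp [hα'i, hne]
    · by_cases h2 : m = j
      · subst h2; rw [hα'j]; simp [h1]; ring
      · simp [hα'other m h1 h2, h1, h2]
  have hsum' : ∀ s : Finset (Fin K), ∑ m ∈ s, α' m
      = (∑ m ∈ s, α m) + ((if i ∈ s then ε else 0) + (if j ∈ s then -ε else 0)) := by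
    intro s
    simp only [hpoint, Finset.sum_add_distrib, Finset.sum_ite_eq' s]
  have hmem : α' ∈ simplex K := by
    constructor
    · intro l
      by_cases h1 : l = i
      · subst h1; rw [hα'i]; have := hnn l; linarith
      · by_cases h2 : l = j
        · subst h2; rw [hα'j, hαj_ε]
          exact div_nonneg (hnn i) ht0.le
        · rw [hα'other l h1 h2]; exact hnn l
    · rw [hsum' Finset.univ]
      simp [hsum]
  -- residuals
  have hres : ∀ l, resid α' l
      = resid α l + ((if l < i then ε else 0) + (if l < j then -ε else 0)) := by
    intro l
    rw [resid, resid, hsum' (Finset.Ioi l)]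
    simp [Finset.mem_Ioi]
  -- margins
  have hmm : ∀ l, l ≠ i → l ≠ j → margin R α' l = margin R α l := by
    intro l h1 h2
    have hiff : l < i ↔ l < j := by
      rw [Fin.lt_def, Fin.lt_def]
      have : l.val ≠ i.val := fun h => h1 (Fin.ext h)
      have : l.val ≠ j.val := fun h => h2 (Fin.ext h)
      omega
    rw [margin, margin, hα'other l h1 h2, hres l]
    by_cases hli : l < i
    · rw [if_pos hli, if_pos (hiff.1 hli)]; ring
    · rw [if_neg hli, if_neg (fun h => hli (hiff.2 h))]; ring
  have hmi : margin R α' i = margin R α j := by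
    rw [margin, margin, hα'i, hres i]
    rw [if_neg (lt_irrefl i), if_pos hlt]
    have : α i + ε - (t - 1) * (resid α i + (0 + -ε)) 
        = margin R α i + t * ε := by rw [margin]; ring
    rw [this, hε_def]
    field_simp
    rw [margin]
    rw [margin]; ring
  have hmj : margin R α' j = margin R α j - ε := by
    rw [margin, margin, hα'j, hres j]
    rw [if_neg (asymm hlt), if_neg (lt_irrefl j)]
    ring
  -- objective comparison
  have hobj : ∀ β : Fin K → ℝ, pdsObj R P σ2 d β
      = ∑ l : Fin K, (if 0 < margin R β l then Real.exp (-((t-1)/(P * margin R β l))/σ2) else 0) * d l := by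
    intro β; rfl
  set φ : ℝ → ℝ := fun z => if 0 < z then Real.exp (-((t-1)/(P*z))/σ2) else 0 with hφ_def
  have hφm : Monotone φ := phi_mono (t-1) P σ2 hγ hP hσ
  have hdiff : pdsObj R P σ2 d α' - pdsObj R P σ2 d α
      = ∑ l ∈ ({i, j} : Finset (Fin K)), (φ (margin R α' l) * d l - φ (margin R α l) * d l) := by
    rw [hobj α', hobj α, ← Finset.sum_sub_distrib]
    refine (Finset.sum_subset (Finset.subset_univ _) ?_).symm
    intro x _ hx
    simp only [Finset.mem_insert, Finset.mem_singleton, not_or] at hx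
    rw [hmm x hx.1 hx.2]
    ring
  rw [Finset.sum_pair hne, hmi, hmj] at hdiff
  -- strict inequality
  have hφstrict : φ (margin R α i) < φ (margin R α j) :=
    phi_strict (t-1) P σ2 hγ hP hσ hcon hj
  have hφ2 : φ (margin R α i) ≤ φ (margin R α j - ε) := by
    apply hφm
    have hle : ε ≤ margin R α j - margin R α i := by
      rw [hε_def]
      exact div_le_self (by linarith) ht1.le
    linarith
  have hpos : 0 < pdsObj R P σ2 d α' - pdsObj R P σ2 d α := by
    rw [hdiff]
    have h1 : (φ (margin R α j) - φ (margin R α i)) * (d i - d j) > 0 := by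
      apply mul_pos (by linarith) (sub_pos.2 (hd hlt))
    nlinarith [hdpos j, hφ2]
  have := hmax α' hmem
  linarith

lemma margin_anti {K : ℕ} (R P σ2 : ℝ)
    (hR : 0 < R) (hP : 0 < P) (hσ : 0 < σ2)
    (d : Fin K → ℝ) (hd : StrictAnti d) (hdpos : ∀ i, 0 < d i)
    (α : Fin K → ℝ) (hα : α ∈ simplex K)
    (hmax : ∀ α' ∈ simplex K, pdsObj R P σ2 d α' ≤ pdsObj R P σ2 d α) :
    ∀ (n : ℕ) (i j : Fin K), (j:ℕ) = (i:ℕ) + n → 0 < margin R α j →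
      margin R α j ≤ margin R α i := by
  intro n
  induction n with
  | zero =>
    intro i j h _
    have : i = j := Fin.ext (by omega)
    rw [this]
  | succ n ih =>
    intro i j h hj
    have hkK : (i:ℕ) + n < K := by
      have := j.isLt; omega
    set k : Fin K := ⟨(i:ℕ) + n, hkK⟩ with hk
    have h1 : (j:ℕ) = (k:ℕ) + 1 := by simp [hk]; omega
    have hjk := adj_margin_le R P σ2 hR hP hσ d hd hdpos α hα hmax h1 hj
    have hk0 : 0 < margin R α k := lt_of_lt_of_le hj hjk
    exact le_trans hjk (ih i k (by simp [hk]) hk0)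

/-- At any maximizer of the PDS objective the thresholds are nondecreasing:
τ_1 ≤ τ_2 ≤ ⋯ ≤ τ_K. -/
theorem tau_monotone_at_maximizer (K : ℕ) (hK : 2 ≤ K) (R P σ2 : ℝ)
    (hR : 0 < R) (hP : 0 < P) (hσ : 0 < σ2)
    (d : Fin K → ℝ) (hd : StrictAnti d) (hdpos : ∀ i, 0 < d i)
    (α : Fin K → ℝ) (hα : α ∈ simplex K)
    (hmax : ∀ α' ∈ simplex K, pdsObj R P σ2 d α' ≤ pdsObj R P σ2 d α) :
    ∀ i j : Fin K, i ≤ j → tau R P α i ≤ tau R P α j := by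
  intro i j hij
  by_cases hj : 0 < margin R α j
  · have hle : margin R α j ≤ margin R α i := by
      apply margin_anti R P σ2 hR hP hσ d hd hdpos α hα hmax ((j:ℕ) - (i:ℕ)) i j _ hj
      have : (i:ℕ) ≤ (j:ℕ) := hij
      omega
    have hi : 0 < margin R α i := lt_of_lt_of_le hj hle
    rw [tau, tau, if_pos hj, if_pos hi]
    have hγ : (0:ℝ) < (2:ℝ)^R - 1 := by
      have ht1 : (1:ℝ) < (2:ℝ)^R :=
        (Real.one_lt_rpow_iff_of_pos (by norm_num)).2 (Or.inl ⟨one_lt_two, hR⟩)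
      linarith
    apply EReal.coe_le_coe_iff.2
    apply div_le_div_of_nonneg_left hγ.le (mul_pos hP hj)
    exact mul_le_mul_of_nonneg_left hle hP.le
  · have : tau R P α j = ⊤ := by rw [tau, if_neg hj]
    rw [this]
    exact le_top
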